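/- arXiv:2512.24875 — 2 statements merged into one kernel-verified Lean document; each statement's English description precedes it below -/
import Mathlib

section
/- Let γ̂ be C² and 2π-periodic with γ̂ > 0 and 3γ̂(θ) − γ̂(θ−π) ≥ c for all θ, where c > 0. Fix θ and α, and let A ≥ (π²/8)·(C_α·sup|γ̂''| + (3|α|+2)|γ̂'(θ)| + γ̂(θ) + (2/c)(α+1)²|γ̂'(θ)|²) with C_α = max{5, (4/π²)(2|α|+1)²}. Define P_A(φ) = γ̂(θ) + ((α−1)/2)γ̂'(θ)sin 2φ + A sin²φ and Q(φ) = γ̂(θ−φ) + γ̂(θ)cos φ + α γ̂'(θ)sin φ. Then the lower bound Q(φ) ≥ −P_A(φ) − γ̂(θ) holds for all φ. -/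
/-!
Since `γ̂ > 0` and `1 + cos φ ≥ 0`, only the first-order terms need control; they combine to
`γ̂'(θ) sin φ (α + (α - 1) cos φ)`, and `|α + (α - 1) cos φ| ≤ 2|α| + 1 =: K`. Taylor's bound
`γ̂(θ + y) ≤ γ̂(θ) + γ̂'(θ) y + (M / 2) y²` at `y = ±K sin φ`, together with `γ̂(θ + y) ≥ 0`, gives
`K |γ̂'(θ)| |sin φ| ≤ γ̂(θ) + (K² M / 2) sin² φ`, and the hypothesis on `A` forces `A ≥ K² M / 2`.
-/

open Real Set

lemma ConvexOn.add_mul_sub_le_of_hasDerivAt {S : Set ℝ} {f : ℝ → ℝ} {f' x y : ℝ}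
    (hf : ConvexOn ℝ S f) (hx : x ∈ S) (hy : y ∈ S) (hf' : HasDerivAt f f' x) :
    f x + f' * (y - x) ≤ f y := by
  rcases lt_trichotomy x y with hxy | rfl | hxy
  · have h := hf.le_slope_of_hasDerivAt hx hy hxy hf'
    rw [slope_def_field, le_div_iff₀ (sub_pos.2 hxy)] at h
    linarith
  · simp
  · have h := hf.slope_le_of_hasDerivAt hy hx hxy hf'
    rw [slope_def_field, div_le_iff₀ (sub_pos.2 hxy)] at h
    linarith

section SecondDerivativeBound

variable {f : ℝ → ℝ} {M : ℝ}

lemma HasDerivAt.half_mul_sq_sub {f' t : ℝ} (hf : HasDerivAt f f' t) :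
    HasDerivAt (fun t => M / 2 * t ^ 2 - f t) (M * t - f') t :=
  (((hasDerivAt_pow 2 t).const_mul (M / 2)).fun_sub hf).congr_deriv (by norm_num; ring)

lemma convexOn_univ_half_mul_sq_sub_of_abs_deriv2_le (hf : ContDiff ℝ 2 f)
    (hM : ∀ x, |deriv (deriv f) x| ≤ M) :
    ConvexOn ℝ univ (fun t => M / 2 * t ^ 2 - f t) := by
  have hf' : Differentiable ℝ f := hf.differentiable (by norm_num)
  have hf'' : Differentiable ℝ (deriv f) :=
    (hf.iterate_deriv' 1 1).differentiable (by norm_num)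
  refine convexOn_of_hasDerivWithinAt2_nonneg convex_univ (f' := fun t => M * t - deriv f t)
    (f'' := fun t => M - deriv (deriv f) t) (by have := hf'.continuous; fun_prop)
    (fun t _ => (hf' t).hasDerivAt.half_mul_sq_sub.hasDerivWithinAt)
    (fun t _ => ?_) (fun t _ => by linarith [(abs_le.1 (hM t)).2])
  exact (((hasDerivAt_id t).const_mul M).fun_sub (hf'' t).hasDerivAt).hasDerivWithinAt
    |>.congr_deriv (by simp)

lemma le_add_deriv_mul_add_of_abs_deriv2_le (hf : ContDiff ℝ 2 f)
    (hM : ∀ x, |deriv (deriv f) x| ≤ M) (x y : ℝ) :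
    f (x + y) ≤ f x + deriv f x * y + M / 2 * y ^ 2 := by
  have h := (convexOn_univ_half_mul_sq_sub_of_abs_deriv2_le hf hM).add_mul_sub_le_of_hasDerivAt
    (mem_univ x) (mem_univ (x + y))
    ((hf.differentiable (by norm_num) x).hasDerivAt.half_mul_sq_sub)
  linarith

lemma abs_deriv_mul_le_of_nonneg (hf : ContDiff ℝ 2 f) (hf₀ : ∀ x, 0 ≤ f x)
    (hM : ∀ x, |deriv (deriv f) x| ≤ M) (x y : ℝ) :
    |deriv f x * y| ≤ f x + M / 2 * y ^ 2 := by
  have hplus := le_add_deriv_mul_add_of_abs_deriv2_le hf hM x y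
  have hminus := le_add_deriv_mul_add_of_abs_deriv2_le hf hM x (-y)
  rw [abs_le]
  constructor <;> linarith [hf₀ (x + y), hf₀ (x + -y)]

end SecondDerivativeBound

lemma abs_add_sub_one_mul_cos_le (α φ : ℝ) : |α + (α - 1) * cos φ| ≤ 2 * |α| + 1 :=
  calc |α + (α - 1) * cos φ| ≤ |α| + |α - 1| * |cos φ| := by
        rw [← abs_mul]; exact abs_add_le _ _
    _ ≤ |α| + (|α| + 1) * 1 := by
        gcongr
        · exact (abs_sub _ _).trans (by norm_num)
        · exact abs_cos_le_one φ
    _ = 2 * |α| + 1 := by ring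

lemma sq_mul_div_two_le_of_pi_sq_div_eight_mul_le {K M R A : ℝ} (hM : 0 ≤ M) (hR : 0 ≤ R)
    (hA : π ^ 2 / 8 * (max 5 (4 / π ^ 2 * K ^ 2) * M + R) ≤ A) :
    K ^ 2 * M / 2 ≤ A :=
  calc K ^ 2 * M / 2 = π ^ 2 / 8 * (4 / π ^ 2 * K ^ 2 * M + 0) := by field_simp; ring
    _ ≤ π ^ 2 / 8 * (max 5 (4 / π ^ 2 * K ^ 2) * M + R) := by gcongr; exact le_max_right _ _
    _ ≤ A := hA

theorem stmt_12_general (γ : ℝ → ℝ) (hγ : ContDiff ℝ 2 γ)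
    (hpos : ∀ x, 0 < γ x)
    (c : ℝ) (hc : 0 < c)
    (θ α M A : ℝ) (hM : ∀ x, |deriv (deriv γ) x| ≤ M)
    (hA : A ≥ Real.pi ^ 2 / 8 *
      (max 5 (4 / Real.pi ^ 2 * (2 * |α| + 1) ^ 2) * M
        + (3 * |α| + 2) * |deriv γ θ| + γ θ
        + 2 / c * (α + 1) ^ 2 * |deriv γ θ| ^ 2)) :
    ∀ φ : ℝ,
      γ (θ - φ) + γ θ * Real.cos φ + α * deriv γ θ * Real.sin φ
        ≥ -(γ θ + (α - 1) / 2 * deriv γ θ * Real.sin (2 * φ) + A * Real.sin φ ^ 2)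
          - γ θ := by
  intro φ
  set K := 2 * |α| + 1
  have hAK : K ^ 2 * M / 2 ≤ A := by
    have hR :
        0 ≤ (3 * |α| + 2) * |deriv γ θ| + γ θ + 2 / c * (α + 1) ^ 2 * |deriv γ θ| ^ 2 := by
      have := hpos θ
      positivity
    exact sq_mul_div_two_le_of_pi_sq_div_eight_mul_le ((abs_nonneg _).trans (hM 0)) hR
      (by linarith)
  have hcross : |deriv γ θ * (sin φ * (α + (α - 1) * cos φ))| ≤ γ θ + A * sin φ ^ 2 :=
    calc |deriv γ θ * (sin φ * (α + (α - 1) * cos φ))| ≤ |deriv γ θ * (sin φ * K)| := by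
          simp only [abs_mul]
          gcongr |deriv γ θ| * (|sin φ| * ?_)
          exact (abs_add_sub_one_mul_cos_le α φ).trans (le_abs_self K)
      _ ≤ γ θ + M / 2 * (sin φ * K) ^ 2 :=
          abs_deriv_mul_le_of_nonneg hγ (fun x => (hpos x).le) hM θ _
      _ ≤ γ θ + A * sin φ ^ 2 := by nlinarith [sq_nonneg (sin φ)]
  have hsplit : α * deriv γ θ * sin φ + (α - 1) / 2 * deriv γ θ * sin (2 * φ)
      = deriv γ θ * (sin φ * (α + (α - 1) * cos φ)) := by
    rw [sin_two_mul]; ring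
  have hcos : 0 ≤ γ θ * (1 + cos φ) :=
    mul_nonneg (hpos θ).le (by linarith [neg_one_le_cos φ])
  linarith [(abs_le.1 hcross).1, hpos (θ - φ)]

theorem stmt_12 (γ : ℝ → ℝ) (hγ : ContDiff ℝ 2 γ)
    (hper : Function.Periodic γ (2 * Real.pi)) (hpos : ∀ x, 0 < γ x)
    (c : ℝ) (hc : 0 < c) (hlow : ∀ θ, 3 * γ θ - γ (θ - Real.pi) ≥ c)
    (θ α M A : ℝ) (hM : ∀ x, |deriv (deriv γ) x| ≤ M)
    (hA : A ≥ Real.pi ^ 2 / 8 *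
      (max 5 (4 / Real.pi ^ 2 * (2 * |α| + 1) ^ 2) * M
        + (3 * |α| + 2) * |deriv γ θ| + γ θ
        + 2 / c * (α + 1) ^ 2 * |deriv γ θ| ^ 2)) :
    ∀ φ : ℝ,
      γ (θ - φ) + γ θ * Real.cos φ + α * deriv γ θ * Real.sin φ
        ≥ -(γ θ + (α - 1) / 2 * deriv γ θ * Real.sin (2 * φ) + A * Real.sin φ ^ 2)
          - γ θ :=
  stmt_12_general γ hγ hpos c hc θ α M A hM hA
end

section
/- Let γ̂ be positive and define, for fixed θ and α, P_a(φ) = γ̂(θ) + ((α−1)/2)γ̂'(θ)sin 2φ + a sin²φ and Q(φ) = γ̂(θ−φ) + γ̂(θ)cos φ + α γ̂'(θ)sin φ. Suppose A ≥ 0 satisfies |Q(φ)| ≤ P_A(φ) + γ̂(θ) for all φ. Then for any a ≥ (1/(4γ̂(θ)))·(A² + 4γ̂(θ)A + (α−1)²γ̂'(θ)²), one has 4γ̂(θ)·P_a(φ) ≥ Q(φ)² for all φ. -/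
/-!
Since `(p + g)² = 4 g p + (p - g)²`, the bound `|Q| ≤ P_A + γ̂(θ)` gives
`Q² ≤ 4 γ̂(θ) P_A + (P_A - γ̂(θ))²`, so it suffices that `(P_A - γ̂(θ))² ≤ 4 γ̂(θ) (P_a - P_A)`.
Here `P_A - γ̂(θ) = (w cos φ + A sin φ) sin φ` with `w = (α - 1) γ̂'(θ)` and `P_a - P_A = (a - A) sin² φ`,
and by Cauchy–Schwarz `(w cos φ + A sin φ)² ≤ w² + A² ≤ 4 γ̂(θ) (a - A)` by the choice of `a`.
-/

lemma sq_le_four_mul_add_of_abs_le {q p g d : ℝ} (hq : |q| ≤ p + g)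
    (hpg : (p - g) ^ 2 ≤ 4 * g * d) : q ^ 2 ≤ 4 * g * (p + d) :=
  calc q ^ 2 ≤ (p + g) ^ 2 := sq_le_sq' (abs_le.mp hq).1 (abs_le.mp hq).2
    _ = 4 * g * p + (p - g) ^ 2 := by ring
    _ ≤ 4 * g * (p + d) := by linarith

lemma Real.sq_mul_cos_add_mul_sin_le (w A φ : ℝ) :
    (w * Real.cos φ + A * Real.sin φ) ^ 2 ≤ w ^ 2 + A ^ 2 := by
  nlinarith [sq_nonneg (w * Real.sin φ - A * Real.cos φ), Real.sin_sq_add_cos_sq φ]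

theorem stmt_14_general (γ : ℝ → ℝ) (hpos : ∀ x, 0 < γ x)
    (θ α A a : ℝ)
    (P : ℝ → ℝ → ℝ)
    (hP : P = fun b φ => γ θ + (α - 1) / 2 * deriv γ θ * Real.sin (2 * φ)
      + b * Real.sin φ ^ 2)
    (Q : ℝ → ℝ)
    (hbound : ∀ φ, |Q φ| ≤ P A φ + γ θ)
    (ha : a ≥ 1 / (4 * γ θ) * (A ^ 2 + 4 * γ θ * A + (α - 1) ^ 2 * deriv γ θ ^ 2)) :
    ∀ φ, 4 * γ θ * P a φ ≥ Q φ ^ 2 := by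
  intro φ
  set w := (α - 1) * deriv γ θ
  have hcoeff : w ^ 2 + A ^ 2 ≤ 4 * γ θ * (a - A) := by
    rw [ge_iff_le, one_div_mul_eq_div, div_le_iff₀ (by linarith [hpos θ])] at ha
    linarith
  have hPa : P a φ = P A φ + (a - A) * Real.sin φ ^ 2 := by
    simp only [hP]; ring
  have hPA : P A φ - γ θ = (w * Real.cos φ + A * Real.sin φ) * Real.sin φ := by
    simp only [hP, Real.sin_two_mul, w]; ring
  rw [ge_iff_le, hPa]
  refine sq_le_four_mul_add_of_abs_le (hbound φ) ?_
  calc (P A φ - γ θ) ^ 2 = (w * Real.cos φ + A * Real.sin φ) ^ 2 * Real.sin φ ^ 2 := by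
        rw [hPA]; ring
    _ ≤ (w ^ 2 + A ^ 2) * Real.sin φ ^ 2 := by
        gcongr; exact Real.sq_mul_cos_add_mul_sin_le w A φ
    _ ≤ 4 * γ θ * ((a - A) * Real.sin φ ^ 2) := by
        rw [← mul_assoc]; gcongr

theorem stmt_14 (γ : ℝ → ℝ) (hdiff : Differentiable ℝ γ) (hpos : ∀ x, 0 < γ x)
    (θ α A a : ℝ) (hA : 0 ≤ A)
    (P : ℝ → ℝ → ℝ)
    (hP : P = fun b φ => γ θ + (α - 1) / 2 * deriv γ θ * Real.sin (2 * φ)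
      + b * Real.sin φ ^ 2)
    (Q : ℝ → ℝ)
    (hQ : Q = fun φ => γ (θ - φ) + γ θ * Real.cos φ + α * deriv γ θ * Real.sin φ)
    (hbound : ∀ φ, |Q φ| ≤ P A φ + γ θ)
    (ha : a ≥ 1 / (4 * γ θ) * (A ^ 2 + 4 * γ θ * A + (α - 1) ^ 2 * deriv γ θ ^ 2)) :
    ∀ φ, 4 * γ θ * P a φ ≥ Q φ ^ 2 :=
  stmt_14_general γ hpos θ α A a P hP Q hbound ha
end
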